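/- If q : Q × Σ → Q is the transition structure of a deterministic finite automaton and the successor relation on Turing machine configurations changes only a bounded window around the head position, then there is a finite automaton reading two configuration encodings interleaved symbol-by-symbol that accepts exactly when the second encoded configuration is the successor of the first. -/

import Mathlib

/-!
A step of the machine changes only the cell under the head and moves the head, so when a
configuration and its successor are read synchronously, every letter away from the head is a
pair `(a, a)` of equal tape symbols. Around the head one sees `(q, b) (a, q')` for a right move
(followed by `(#, blank)` when the tape is extended) and `(c, q') (q, c) (a, b)` for a left move,
with `δ q a = (q', b, _)`. These window words form a language that a DFA recognizes by copying,
checking the window against `δ`, and copying again; its correctness follows from an explicit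
description of the language accepted from each state.
-/

/-- Encoding alphabet for Turing machine configurations: control states, tape symbols,
and the end-of-tape marker `#`. -/
abbrev TMAlpha (Q Γ : Type) := Q ⊕ Γ ⊕ Unit

/-- Encoding of a configuration `(q, w, j)` as the string
`w₁ … w_{j-1} q w_j … w_{|w|} #`. -/
def encodeConf {Q Γ : Type} (q : Q) (w : List Γ) (j : ℕ) : List (TMAlpha Q Γ) :=
  (w.take j).map (fun a => Sum.inr (Sum.inl a)) ++ [Sum.inl q] ++
    (w.drop j).map (fun a => Sum.inr (Sum.inl a)) ++ [Sum.inr (Sum.inr ())]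

/-- One step of a deterministic Turing machine with transition function `δ`
(`true` = move right, `false` = move left); the tape is extended with a blank when the
head moves past the right end; the machine never moves left of the initial cell.
The successor configuration differs from the original only in a bounded window around
the head position. -/
def tmStep {Q Γ : Type} (δ : Q → Γ → Q × Γ × Bool) (blank : Γ) :
    Q × List Γ × ℕ → Option (Q × List Γ × ℕ)
  | (q, w, j) =>
    match w[j]? with
    | none => none
    | some a =>
      let t := δ q a
      let w' := w.set j t.2.1
      if t.2.2 then
        some (t.1, if j + 1 = w.length then w' ++ [blank] else w', j + 1)
      else if j = 0 then none else some (t.1, w', j - 1)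

/-- Padding an encoding with `#` markers up to length `n`. -/
def padEnc {Q Γ : Type} (l : List (TMAlpha Q Γ)) (n : ℕ) : List (TMAlpha Q Γ) :=
  l ++ List.replicate (n - l.length) (Sum.inr (Sum.inr ()))

/-- The language of two configuration encodings read synchronously symbol-by-symbol such
that the second encoded configuration is the successor of the first. -/
def succLang {Q Γ : Type} (δ : Q → Γ → Q × Γ × Bool) (blank : Γ) :
    Language (TMAlpha Q Γ × TMAlpha Q Γ) :=
  { x | ∃ (q : Q) (w : List Γ) (j : ℕ) (q' : Q) (w' : List Γ) (j' : ℕ),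
      tmStep δ blank (q, w, j) = some (q', w', j') ∧
      x = List.zip
        (padEnc (encodeConf q w j)
          (max (encodeConf q w j).length (encodeConf q' w' j').length))
        (padEnc (encodeConf q' w' j')
          (max (encodeConf q w j).length (encodeConf q' w' j').length)) }


theorem DFA.induction_of_mem_acceptsFrom {α σ : Type*} {M : DFA α σ} (P : σ → List α → Prop)
    (h_accept : ∀ s ∈ M.accept, P s [])
    (h_step : ∀ s a x, P (M.step s a) x → P s (a :: x)) {s : σ} {x : List α}
    (hx : x ∈ M.acceptsFrom s) : P s x := by
  induction x generalizing s with
  | nil => exact h_accept s hx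
  | cons a x ih => exact h_step s a x (ih hx)

theorem DFA.evalFrom_map_append_of_step_eq {α β σ : Type*} (M : DFA α σ) {s : σ} (f : β → α)
    (hf : ∀ b, M.step s (f b) = s) (u : List β) (x : List α) :
    M.evalFrom s (u.map f ++ x) = M.evalFrom s x := by
  induction u with
  | nil => rfl
  | cons b u ih => rw [List.map_cons, List.cons_append, DFA.evalFrom_cons, hf, ih]

namespace TMSuccessor

variable {Q Γ : Type}

abbrev tapeSym (a : Γ) : TMAlpha Q Γ := Sum.inr (Sum.inl a)

abbrev endMark : TMAlpha Q Γ := Sum.inr (Sum.inr ())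

def copied (u : List Γ) : List (TMAlpha Q Γ × TMAlpha Q Γ) := u.map fun a => (tapeSym a, tapeSym a)

theorem copied_cons (a : Γ) (u : List Γ) :
    copied (a :: u) = ((tapeSym a, tapeSym a) :: copied u : List (TMAlpha Q Γ × TMAlpha Q Γ)) :=
  rfl

def syncRead (l₁ l₂ : List (TMAlpha Q Γ)) : List (TMAlpha Q Γ × TMAlpha Q Γ) :=
  (padEnc l₁ (max l₁.length l₂.length)).zip (padEnc l₂ (max l₁.length l₂.length))

theorem syncRead_of_length_eq {l₁ l₂ : List (TMAlpha Q Γ)} (h : l₁.length = l₂.length) :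
    syncRead l₁ l₂ = l₁.zip l₂ := by
  simp [syncRead, padEnc, h]

theorem syncRead_of_length_eq_succ {l₁ l₂ : List (TMAlpha Q Γ)}
    (h : l₂.length = l₁.length + 1) : syncRead l₁ l₂ = (l₁ ++ [endMark]).zip l₂ := by
  simp [syncRead, padEnc, h]

theorem zip_map_tapeSym_append (u : List Γ) (x y : List (TMAlpha Q Γ)) :
    (u.map tapeSym ++ x).zip (u.map tapeSym ++ y) = copied u ++ x.zip y := by
  rw [List.zip_append (by simp), List.zip_map', copied]

theorem encodeConf_append_cons (q : Q) (u : List Γ) (a : Γ) (v : List Γ) :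
    encodeConf q (u ++ a :: v) u.length =
      u.map tapeSym ++ Sum.inl q :: tapeSym a :: (v.map tapeSym ++ [endMark]) := by
  simp [encodeConf]

theorem syncRead_moveRight (q q' : Q) (u : List Γ) (a b c : Γ) (v : List Γ) :
    syncRead (encodeConf q (u ++ a :: c :: v) u.length)
        (encodeConf q' (u ++ b :: c :: v) (u.length + 1)) =
      copied u ++ (Sum.inl q, tapeSym b) :: (tapeSym a, Sum.inl q') ::
        (copied (c :: v) ++ [(endMark, endMark)]) := by
  have h := encodeConf_append_cons q' (u ++ [b]) c v
  simp only [List.append_assoc, List.cons_append, List.nil_append, List.length_append,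
    List.length_singleton] at h
  rw [encodeConf_append_cons, h, syncRead_of_length_eq (by simp), List.map_append,
    List.append_assoc, zip_map_tapeSym_append]
  simp [copied, zip_map_tapeSym_append]

theorem syncRead_moveRight_extend (q q' : Q) (u : List Γ) (a b blank : Γ) :
    syncRead (encodeConf q (u ++ [a]) u.length)
        (encodeConf q' (u ++ [b, blank]) (u.length + 1)) =
      copied u ++ [(Sum.inl q, tapeSym b), (tapeSym a, Sum.inl q'), (endMark, tapeSym blank),
        (endMark, endMark)] := by
  have h := encodeConf_append_cons q' (u ++ [b]) blank []
  simp only [List.append_assoc, List.cons_append, List.nil_append, List.length_append,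
    List.length_singleton] at h
  rw [encodeConf_append_cons, h, syncRead_of_length_eq_succ (by simp), List.map_append,
    List.append_assoc, List.append_assoc, zip_map_tapeSym_append]
  simp

theorem syncRead_moveLeft (q q' : Q) (u : List Γ) (a b c : Γ) (v : List Γ) :
    syncRead (encodeConf q (u ++ c :: a :: v) (u.length + 1))
        (encodeConf q' (u ++ c :: b :: v) u.length) =
      copied u ++ (tapeSym c, Sum.inl q') :: (Sum.inl q, tapeSym c) :: (tapeSym a, tapeSym b) ::
        (copied v ++ [(endMark, endMark)]) := by
  have h := encodeConf_append_cons q (u ++ [c]) a v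
  simp only [List.append_assoc, List.cons_append, List.nil_append, List.length_append,
    List.length_singleton] at h
  rw [h, encodeConf_append_cons, syncRead_of_length_eq (by simp), List.map_append,
    List.append_assoc, zip_map_tapeSym_append]
  simp [zip_map_tapeSym_append]

variable (δ : Q → Γ → Q × Γ × Bool) (blank : Γ)

theorem tmStep_eq_some_iff {q q' : Q} {w w' : List Γ} {j j' : ℕ} :
    tmStep δ blank (q, w, j) = some (q', w', j') ↔
      (∃ u a b c v, δ q a = (q', b, true) ∧ w = u ++ a :: c :: v ∧ j = u.length ∧
          w' = u ++ b :: c :: v ∧ j' = u.length + 1) ∨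
      (∃ u a b, δ q a = (q', b, true) ∧ w = u ++ [a] ∧ j = u.length ∧
          w' = u ++ [b, blank] ∧ j' = u.length + 1) ∨
      (∃ u c a b v, δ q a = (q', b, false) ∧ w = u ++ c :: a :: v ∧ j = u.length + 1 ∧
          w' = u ++ c :: b :: v ∧ j' = u.length) := by
  constructor
  · intro h
    cases hget : w[j]? with
    | none => simp [tmStep, hget] at h
    | some a =>
      obtain ⟨hj, rfl⟩ := List.getElem?_eq_some_iff.mp hget
      rcases hδ : δ q w[j] with ⟨q₁, b, d⟩
      obtain ⟨u, v, hw, rfl, hset⟩ := List.exists_of_set (a' := b) hj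
      simp only [tmStep, hget, hδ, hset] at h
      generalize w[u.length] = a at hδ hw
      subst hw
      cases d with
      | true =>
        simp only [if_true, Option.some.injEq, Prod.mk.injEq] at h
        obtain ⟨rfl, rfl, rfl⟩ := h
        cases v with
        | nil => exact Or.inr (Or.inl ⟨u, a, b, hδ, rfl, rfl, by simp, rfl⟩)
        | cons c v => exact Or.inl ⟨u, a, b, c, v, hδ, rfl, rfl, by simp, rfl⟩
      | false =>
        rcases List.eq_nil_or_concat u with rfl | ⟨u, c, rfl⟩
        · simp at h
        · simp only [List.concat_eq_append] at h ⊢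
          rw [if_neg Bool.false_ne_true, if_neg (by simp), Option.some_inj] at h
          simp only [Prod.mk.injEq] at h
          obtain ⟨rfl, rfl, rfl⟩ := h
          exact Or.inr (Or.inr ⟨u, c, a, b, v, hδ, by simp, by simp, by simp, by simp⟩)
  · rintro (⟨u, a, b, c, v, hδ, rfl, rfl, rfl, rfl⟩ | ⟨u, a, b, hδ, rfl, rfl, rfl, rfl⟩ |
        ⟨u, c, a, b, v, hδ, rfl, rfl, rfl, rfl⟩) <;>
      simp [tmStep, hδ]

def windowLang : Language (TMAlpha Q Γ × TMAlpha Q Γ) :=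
  {x | (∃ u q a q' b c v, δ q a = (q', b, true) ∧
        x = copied u ++ (Sum.inl q, tapeSym b) :: (tapeSym a, Sum.inl q') ::
          (copied (c :: v) ++ [(endMark, endMark)])) ∨
      (∃ u q a q' b, δ q a = (q', b, true) ∧
        x = copied u ++ [(Sum.inl q, tapeSym b), (tapeSym a, Sum.inl q'),
          (endMark, tapeSym blank), (endMark, endMark)]) ∨
      (∃ u c q a q' b v, δ q a = (q', b, false) ∧
        x = copied u ++ (tapeSym c, Sum.inl q') :: (Sum.inl q, tapeSym c) ::
          (tapeSym a, tapeSym b) :: (copied v ++ [(endMark, endMark)]))}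

theorem succLang_eq_windowLang : succLang δ blank = windowLang δ blank := by
  ext x
  constructor
  · rintro ⟨q, w, j, q', w', j', hstep, rfl⟩
    rcases (tmStep_eq_some_iff δ blank).mp hstep with
      ⟨u, a, b, c, v, hδ, rfl, rfl, rfl, rfl⟩ | ⟨u, a, b, hδ, rfl, rfl, rfl, rfl⟩ |
        ⟨u, c, a, b, v, hδ, rfl, rfl, rfl, rfl⟩
    · exact Or.inl ⟨u, q, a, q', b, c, v, hδ, syncRead_moveRight q q' u a b c v⟩
    · exact Or.inr (Or.inl ⟨u, q, a, q', b, hδ, syncRead_moveRight_extend q q' u a b blank⟩)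
    · exact Or.inr (Or.inr ⟨u, c, q, a, q', b, v, hδ, syncRead_moveLeft q q' u a b c v⟩)
  · rintro (⟨u, q, a, q', b, c, v, hδ, rfl⟩ | ⟨u, q, a, q', b, hδ, rfl⟩ |
        ⟨u, c, q, a, q', b, v, hδ, rfl⟩)
    · exact ⟨q, _, _, q', _, _, (tmStep_eq_some_iff δ blank).mpr
        (Or.inl ⟨u, a, b, c, v, hδ, rfl, rfl, rfl, rfl⟩), (syncRead_moveRight q q' u a b c v).symm⟩
    · exact ⟨q, _, _, q', _, _, (tmStep_eq_some_iff δ blank).mpr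
        (Or.inr (Or.inl ⟨u, a, b, hδ, rfl, rfl, rfl, rfl⟩)),
        (syncRead_moveRight_extend q q' u a b blank).symm⟩
    · exact ⟨q, _, _, q', _, _, (tmStep_eq_some_iff δ blank).mpr
        (Or.inr (Or.inr ⟨u, c, a, b, v, hδ, rfl, rfl, rfl, rfl⟩)),
        (syncRead_moveLeft q q' u a b c v).symm⟩

inductive CheckState (Q Γ : Type) where
  | copyPrefix
  | awaitRightTarget (q : Q) (b : Γ)
  | afterRightMove
  | awaitEnd
  | awaitLeftSource (c : Γ) (q' : Q)
  | awaitLeftCell (q q' : Q)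
  | copySuffix
  | done
  | fail
deriving Fintype

def AfterRightMove (y : List (TMAlpha Q Γ × TMAlpha Q Γ)) : Prop :=
  (∃ c v, y = copied (c :: v) ++ [(endMark, endMark)]) ∨
    y = [(endMark, tapeSym blank), (endMark, endMark)]

def Residual : CheckState Q Γ → List (TMAlpha Q Γ × TMAlpha Q Γ) → Prop
  | .copyPrefix, x => x ∈ windowLang δ blank
  | .awaitRightTarget q b, x => ∃ a q' y, δ q a = (q', b, true) ∧
      x = (tapeSym a, Sum.inl q') :: y ∧ AfterRightMove blank y
  | .afterRightMove, x => AfterRightMove blank x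
  | .awaitEnd, x => x = [(endMark, endMark)]
  | .awaitLeftSource c q', x => ∃ q a b v, δ q a = (q', b, false) ∧
      x = (Sum.inl q, tapeSym c) :: (tapeSym a, tapeSym b) :: (copied v ++ [(endMark, endMark)])
  | .awaitLeftCell q q', x => ∃ a b v, δ q a = (q', b, false) ∧
      x = (tapeSym a, tapeSym b) :: (copied v ++ [(endMark, endMark)])
  | .copySuffix, x => ∃ v, x = copied v ++ [(endMark, endMark)]
  | .done, x => x = []
  | .fail, _ => False

variable [DecidableEq Q] [DecidableEq Γ]

def checkStep : CheckState Q Γ → TMAlpha Q Γ × TMAlpha Q Γ → CheckState Q Γ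
  | .copyPrefix, (Sum.inr (Sum.inl c), Sum.inr (Sum.inl c')) =>
      if c = c' then .copyPrefix else .fail
  | .copyPrefix, (Sum.inl q, Sum.inr (Sum.inl b)) => .awaitRightTarget q b
  | .copyPrefix, (Sum.inr (Sum.inl c), Sum.inl q') => .awaitLeftSource c q'
  | .awaitRightTarget q b, (Sum.inr (Sum.inl a), Sum.inl q') =>
      if δ q a = (q', b, true) then .afterRightMove else .fail
  | .afterRightMove, (Sum.inr (Sum.inl c), Sum.inr (Sum.inl c')) =>
      if c = c' then .copySuffix else .fail
  | .afterRightMove, (Sum.inr (Sum.inr _), Sum.inr (Sum.inl b)) =>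
      if b = blank then .awaitEnd else .fail
  | .awaitEnd, (Sum.inr (Sum.inr _), Sum.inr (Sum.inr _)) => .done
  | .awaitLeftSource c q', (Sum.inl q, Sum.inr (Sum.inl c')) =>
      if c = c' then .awaitLeftCell q q' else .fail
  | .awaitLeftCell q q', (Sum.inr (Sum.inl a), Sum.inr (Sum.inl b)) =>
      if δ q a = (q', b, false) then .copySuffix else .fail
  | .copySuffix, (Sum.inr (Sum.inl c), Sum.inr (Sum.inl c')) =>
      if c = c' then .copySuffix else .fail
  | .copySuffix, (Sum.inr (Sum.inr _), Sum.inr (Sum.inr _)) => .done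
  | _, _ => .fail

@[simps]
def succChecker : DFA (TMAlpha Q Γ × TMAlpha Q Γ) (CheckState Q Γ) where
  step := checkStep δ blank
  start := .copyPrefix
  accept := {.done}

theorem cons_mem_windowLang_of_residual (p : TMAlpha Q Γ × TMAlpha Q Γ)
    (y : List (TMAlpha Q Γ × TMAlpha Q Γ))
    (h : Residual δ blank (checkStep δ blank .copyPrefix p) y) :
    p :: y ∈ windowLang δ blank := by
  rcases p with ⟨q | c | _, q' | c' | _⟩ <;> simp only [checkStep] at h <;>
    try exact (h : False).elim
  · obtain ⟨a, q', y, hδ, rfl, ⟨c, v, rfl⟩ | rfl⟩ := h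
    · exact Or.inl ⟨[], q, a, q', c', c, v, hδ, rfl⟩
    · exact Or.inr (Or.inl ⟨[], q, a, q', c', hδ, rfl⟩)
  · obtain ⟨q, a, b, v, hδ, rfl⟩ := h
    exact Or.inr (Or.inr ⟨[], c, q, a, q', b, v, hδ, rfl⟩)
  · split_ifs at h with hc
    · subst hc
      rcases h with ⟨u, q, a, q', b, c', v, hδ, rfl⟩ | ⟨u, q, a, q', b, hδ, rfl⟩ |
        ⟨u, c', q, a, q', b, v, hδ, rfl⟩
      · exact Or.inl ⟨c :: u, q, a, q', b, c', v, hδ, rfl⟩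
      · exact Or.inr (Or.inl ⟨c :: u, q, a, q', b, hδ, rfl⟩)
      · exact Or.inr (Or.inr ⟨c :: u, c', q, a, q', b, v, hδ, rfl⟩)
    · exact (h : False).elim

theorem residual_cons_of_residual_checkStep (s : CheckState Q Γ)
    (p : TMAlpha Q Γ × TMAlpha Q Γ) (y : List (TMAlpha Q Γ × TMAlpha Q Γ))
    (h : Residual δ blank (checkStep δ blank s p) y) : Residual δ blank s (p :: y) := by
  cases s
  case copyPrefix => exact cons_mem_windowLang_of_residual δ blank p y h
  case copySuffix =>
    rcases p with ⟨_ | c | _, _ | c' | _⟩ <;> simp only [checkStep] at h <;>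
      try exact (h : False).elim
    · split_ifs at h with hc
      · obtain ⟨v, rfl⟩ := h
        exact ⟨c :: v, by rw [hc]; rfl⟩
      · exact (h : False).elim
    · exact ⟨[], by rw [h]; rfl⟩
  all_goals rcases p with ⟨q₁ | c₁ | _, q₂ | c₂ | _⟩ <;> simp only [checkStep] at h <;>
    (try split_ifs at h) <;> simp_all [Residual, AfterRightMove, copied]

theorem evalFrom_copyPrefix_copied (u : List Γ) (x : List (TMAlpha Q Γ × TMAlpha Q Γ)) :
    (succChecker δ blank).evalFrom .copyPrefix (copied u ++ x) =
      (succChecker δ blank).evalFrom .copyPrefix x :=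
  DFA.evalFrom_map_append_of_step_eq _ _ (by simp [checkStep]) u x

theorem evalFrom_copySuffix_copied (u : List Γ) (x : List (TMAlpha Q Γ × TMAlpha Q Γ)) :
    (succChecker δ blank).evalFrom .copySuffix (copied u ++ x) =
      (succChecker δ blank).evalFrom .copySuffix x :=
  DFA.evalFrom_map_append_of_step_eq _ _ (by simp [checkStep]) u x

theorem mem_accepts_of_mem_windowLang {x : List (TMAlpha Q Γ × TMAlpha Q Γ)}
    (hx : x ∈ windowLang δ blank) : x ∈ (succChecker δ blank).accepts := by
  rw [DFA.mem_accepts]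
  rcases hx with (⟨u, q, a, q', b, c, v, hδ, rfl⟩ | ⟨u, q, a, q', b, hδ, rfl⟩ |
    ⟨u, c, q, a, q', b, v, hδ, rfl⟩) <;>
  simp [DFA.eval, evalFrom_copyPrefix_copied, evalFrom_copySuffix_copied, copied_cons, checkStep,
    hδ, -DFA.evalFrom_append_singleton]

theorem accepts_succChecker : (succChecker δ blank).accepts = windowLang δ blank := by
  ext x
  refine ⟨fun hx => ?_, mem_accepts_of_mem_windowLang δ blank⟩
  exact DFA.induction_of_mem_acceptsFrom (Residual δ blank) (by rintro _ rfl; rfl)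
    (residual_cons_of_residual_checkStep δ blank) hx

end TMSuccessor

/-- There is a finite automaton reading two configuration encodings interleaved
symbol-by-symbol that accepts exactly when the second configuration is the successor of
the first. -/
theorem stmt_16 {Q Γ : Type} [Fintype Q] [Fintype Γ] [DecidableEq Q] [DecidableEq Γ]
    (δ : Q → Γ → Q × Γ × Bool) (blank : Γ) :
    ∃ (σ : Type) (_ : Fintype σ) (D : DFA (TMAlpha Q Γ × TMAlpha Q Γ) σ),
      D.accepts = succLang δ blank := by
  refine ⟨TMSuccessor.CheckState Q Γ, inferInstance, TMSuccessor.succChecker δ blank, ?_⟩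
  rw [TMSuccessor.accepts_succChecker, TMSuccessor.succLang_eq_windowLang]
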